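/- arXiv:math/0507311 — 4 statements merged into one kernel-verified Lean document; each statement's English description precedes it below -/
import Mathlib

section
/- Let A be an essential finite arrangement of affine hyperplanes in ℝ^ℓ and let F^{ℓ−1} be a generic affine hyperplane for A. Then b_ℓ(A) = β(A ∪ {F^{ℓ−1}}), where A ∪ {F^{ℓ−1}} is the arrangement obtained by adding the hyperplane F^{ℓ−1} to A. -/
open scoped Classical

noncomputable section

variable (K : Type) [Field K] {V : Type} [AddCommGroup V] [Module K V]

/-- An affine hyperplane in `V`: the level set of a nonzero linear functional. -/
def IsHyperplane (H : Set V) : Prop :=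
  ∃ (f : V →ₗ[K] K) (c : K), f ≠ 0 ∧ H = {x | f x = c}

/-- The dimension of a subset of `V`: the dimension of its affine span. -/
def flatDim (X : Set V) : ℕ := Module.finrank K (affineSpan K X).direction

/-- The intersection poset `L(A)` of the arrangement `A` inside the ambient set `W`:
all nonempty intersections of subfamilies of `A` (intersected with the ambient `W`),
the empty subfamily giving `W` itself. -/
def interPosetIn (W : Set V) (A : Finset (Set V)) : Finset (Set V) :=
  (A.powerset.image fun S => W ∩ ⋂ H ∈ S, H).filter fun X => X.Nonempty

/-- The rank of `X`: its codimension within the ambient space `W`. -/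
def rkIn (W X : Set V) : ℕ := flatDim K W - flatDim K X

/-- `μ` satisfies the defining recursion of the Möbius function of the poset
`L(A)` inside the ambient set `W`.  `L(A)` is ordered by reverse inclusion, so the
condition `μ(W) = 1`, `μ(X) = -∑_{Y < X} μ(Y)` for `X > W` is equivalent to:
for every `X ∈ L(A)`, `∑_{Y ⊇ X} μ(Y)` is `1` if `X = W` and `0` otherwise. -/
def IsMobiusIn (W : Set V) (A : Finset (Set V)) (μ : Set V → ℤ) : Prop :=
  ∀ X ∈ interPosetIn W A,
    (∑ Y ∈ (interPosetIn W A).filter fun Y => X ⊆ Y, μ Y) = if X = W then 1 else 0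

/-- The Poincaré polynomial `π(A,t) = ∑_{X ∈ L(A)} μ(X) (-t)^{r(X)}`. -/
def poinIn (W : Set V) (A : Finset (Set V)) (μ : Set V → ℤ) : Polynomial ℤ :=
  ∑ X ∈ interPosetIn W A, Polynomial.C (μ X) * (- Polynomial.X) ^ (rkIn K W X)

/-- A chamber of the arrangement `A` within the ambient set `W`: a connected
component of `W ∖ ⋃_{H ∈ A} H`. -/
def IsChamberIn [TopologicalSpace V] (W : Set V) (A : Finset (Set V)) (C : Set V) : Prop :=
  ∃ x ∈ W ∩ (⋃ H ∈ A, (H : Set V))ᶜ, C = connectedComponentIn (W ∩ (⋃ H ∈ A, (H : Set V))ᶜ) x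

/-- `F` is a generic (transversal) `q`-dimensional affine subspace for the
arrangement `A`: it is (the carrier of) an affine subspace of dimension `q`, and
for every `X ∈ L(A)`, if `r(X) ≤ q` then `F ∩ X` is nonempty of dimension
`q - r(X)`, and if `r(X) > q` then `F ∩ X = ∅`. -/
def IsGenericFlat (q : ℕ) (A : Finset (Set V)) (F : Set V) : Prop :=
  (∃ W : AffineSubspace K V, (W : Set V) = F) ∧ F.Nonempty ∧ flatDim K F = q ∧
  ∀ X ∈ interPosetIn Set.univ A,
    (rkIn K Set.univ X ≤ q → (F ∩ X).Nonempty ∧ flatDim K (F ∩ X) = q - rkIn K Set.univ X) ∧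
    (q < rkIn K Set.univ X → F ∩ X = ∅)

end

/-!
Adding a generic hyperplane `F` to `A` adds exactly the flats `F ∩ X` with `X ∈ L(A)` of positive
dimension: by transversality no flat of `L(A)` lies in `F`, and `F ∩ X ⊆ Y` forces `X ⊆ Y`, so
`X ↦ F ∩ X` embeds these flats into `L(A ∪ {F})` disjointly from `L(A)`. Uniqueness of solutions
of the Möbius recursion then gives `μ' = μ` on `L(A)` and `μ'(F ∩ X) = -μ(X)`, so
`π(A ∪ {F}, -1) = ∑ μ'` collapses to the sum of `μ` over the points of `L(A)`, which is
`(-1)^ℓ b_ℓ(A)`. Weisner's theorem gives `(-1)^r(X) μ(X) ≥ 0` by induction on the rank, so all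
terms of that sum have the same sign and its absolute value is `b_ℓ(A)`.
-/

open Finset Module

section IntersectionPoset

variable {α : Type} {W F H X Y : Set α} {A : Finset (Set α)}

theorem mem_interPosetIn :
    X ∈ interPosetIn W A ↔ (∃ S ⊆ A, W ∩ ⋂ H ∈ S, H = X) ∧ X.Nonempty := by
  simp only [interPosetIn, mem_filter, mem_image, mem_powerset]

theorem subset_of_mem_interPosetIn (hX : X ∈ interPosetIn W A) : X ⊆ W := by
  obtain ⟨⟨S, -, rfl⟩, -⟩ := mem_interPosetIn.1 hX
  exact Set.inter_subset_left

theorem self_mem_interPosetIn (hW : W.Nonempty) : W ∈ interPosetIn W A :=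
  mem_interPosetIn.2 ⟨⟨∅, empty_subset A, by simp⟩, hW⟩

theorem inter_mem_interPosetIn (hX : X ∈ interPosetIn W A) (hY : Y ∈ interPosetIn W A)
    (hne : (X ∩ Y).Nonempty) : X ∩ Y ∈ interPosetIn W A := by
  obtain ⟨⟨S, hS, rfl⟩, -⟩ := mem_interPosetIn.1 hX
  obtain ⟨⟨T, hT, rfl⟩, -⟩ := mem_interPosetIn.1 hY
  refine mem_interPosetIn.2 ⟨⟨S ∪ T, union_subset hS hT, ?_⟩, hne⟩
  rw [set_biInter_inter]
  ext; simp only [Set.mem_inter_iff]; tauto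

theorem inter_mem_interPosetIn_of_mem (hX : X ∈ interPosetIn W A) (hH : H ∈ A)
    (hne : (X ∩ H).Nonempty) : X ∩ H ∈ interPosetIn W A := by
  obtain ⟨⟨S, hS, rfl⟩, -⟩ := mem_interPosetIn.1 hX
  refine mem_interPosetIn.2 ⟨⟨insert H S, insert_subset hH hS, ?_⟩, hne⟩
  rw [set_biInter_insert]
  ext; simp only [Set.mem_inter_iff]; tauto

theorem exists_mem_subset_of_mem_interPosetIn (hX : X ∈ interPosetIn W A) (hXW : X ≠ W) :
    ∃ H ∈ A, X ⊆ H := by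
  obtain ⟨⟨S, hS, rfl⟩, -⟩ := mem_interPosetIn.1 hX
  obtain ⟨H, hH⟩ : S.Nonempty := nonempty_iff_ne_empty.2 fun h => hXW (by simp [h])
  exact ⟨H, hS hH, Set.inter_subset_right.trans (Set.biInter_subset_of_mem hH)⟩

theorem interPosetIn_univ_of_subsingleton [Subsingleton α] [Nonempty α] :
    interPosetIn Set.univ A = {Set.univ} := by
  ext X
  rw [mem_singleton]
  refine ⟨fun hX => (mem_interPosetIn.1 hX).2.eq_univ, ?_⟩
  rintro rfl
  exact self_mem_interPosetIn Set.univ_nonempty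

theorem interPosetIn_insert :
    interPosetIn W (insert F A) =
      interPosetIn W A ∪ {X ∈ interPosetIn W A | (F ∩ X).Nonempty}.image (F ∩ ·) := by
  ext Z
  simp only [mem_union, mem_image, mem_filter, mem_interPosetIn]
  constructor
  · rintro ⟨⟨S, hS, rfl⟩, hZ⟩
    rw [subset_insert_iff] at hS
    by_cases hFS : F ∈ S
    · have hsplit : W ∩ ⋂ H ∈ S, H = F ∩ (W ∩ ⋂ H ∈ S.erase F, H) := by
        conv_lhs => rw [← insert_erase hFS, set_biInter_insert]
        ext; simp only [Set.mem_inter_iff]; tauto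
      rw [hsplit] at hZ ⊢
      exact Or.inr ⟨_, ⟨⟨⟨S.erase F, hS, rfl⟩, hZ.mono Set.inter_subset_right⟩, hZ⟩, rfl⟩
    · rw [erase_eq_of_notMem hFS] at hS
      exact Or.inl ⟨⟨S, hS, rfl⟩, hZ⟩
  · rintro (⟨⟨S, hS, rfl⟩, hZ⟩ | ⟨X, ⟨⟨⟨S, hS, rfl⟩, -⟩, hne⟩, rfl⟩)
    · exact ⟨⟨S, hS.trans (subset_insert F A), rfl⟩, hZ⟩
    · refine ⟨⟨insert F S, insert_subset_insert F hS, ?_⟩, hne⟩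
      rw [set_biInter_insert]
      ext; simp only [Set.mem_inter_iff]; tauto

end IntersectionPoset

section Mobius

variable {α : Type} {W H X : Set α} {A A' : Finset (Set α)} {μ μ' : Set α → ℤ}

theorem eq_zero_of_sum_supersets_eq_zero {β : Type*} [AddCommMonoid β] {L : Finset (Set α)}
    {f : Set α → β} (h : ∀ X ∈ L, ∑ Y ∈ L with X ⊆ Y, f Y = 0) : ∀ X ∈ L, f X = 0 := by
  by_contra! ⟨X, hX, hfX⟩
  obtain ⟨M, hM⟩ := exists_maximal (s := {X ∈ L | f X ≠ 0}) ⟨X, mem_filter.2 ⟨hX, hfX⟩⟩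
  obtain ⟨hML, hfM⟩ := mem_filter.1 hM.prop
  -- by maximality, `M` is the only superset of `M` on which `f` does not vanish
  have hsum := h M hML
  rw [sum_eq_single_of_mem M (mem_filter.2 ⟨hML, subset_rfl⟩)] at hsum
  · exact hfM hsum
  · intro Y hY hYM
    obtain ⟨hYL, hMY⟩ := mem_filter.1 hY
    by_contra hfY
    exact hYM (subset_antisymm (hM.le_of_ge (mem_filter.2 ⟨hYL, hfY⟩) hMY) hMY)

theorem IsMobiusIn.apply_self (hμ : IsMobiusIn W A μ) (hW : W.Nonempty) : μ W = 1 := by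
  have hWL := self_mem_interPosetIn (A := A) hW
  have h := hμ W hWL
  rwa [if_pos rfl, sum_eq_single_of_mem W (mem_filter.2 ⟨hWL, subset_rfl⟩)] at h
  intro Y hY hYW
  obtain ⟨hYL, hWY⟩ := mem_filter.1 hY
  exact absurd (subset_antisymm (subset_of_mem_interPosetIn hYL) hWY) hYW

theorem IsMobiusIn.eq_of_filter_superset_eq (hμ : IsMobiusIn W A μ) (hμ' : IsMobiusIn W A' μ')
    (h : ∀ X ∈ interPosetIn W A,
      {Y ∈ interPosetIn W A' | X ⊆ Y} = {Y ∈ interPosetIn W A | X ⊆ Y}) :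
    ∀ X ∈ interPosetIn W A, μ' X = μ X := by
  have hsub : ∀ X ∈ interPosetIn W A, X ∈ interPosetIn W A' := by
    intro X hX
    have hX' : X ∈ {Y ∈ interPosetIn W A' | X ⊆ Y} := by
      rw [h X hX]
      exact mem_filter.2 ⟨hX, subset_rfl⟩
    exact (mem_filter.1 hX').1
  refine fun X hX => sub_eq_zero.1 (eq_zero_of_sum_supersets_eq_zero (f := μ' - μ) ?_ X hX)
  intro X hX
  have hμ'X := hμ' X (hsub X hX)
  rw [h X hX] at hμ'X
  simp only [Pi.sub_apply, sum_sub_distrib, hμ'X, hμ X hX, sub_self]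

/-- Weisner's theorem. -/
theorem IsMobiusIn.sum_inter_eq_zero (hμ : IsMobiusIn W A μ) (hH : H ∈ A) (hWH : ¬ W ⊆ H)
    (hX : X ∈ interPosetIn W A) (hXH : X ⊆ H) :
    ∑ Y ∈ interPosetIn W A with Y ∩ H = X, μ Y = 0 := by
  set L := interPosetIn W A
  let g : Set α → ℤ := fun X => ∑ Y ∈ L with Y ∩ H = X, μ Y
  -- summing `g` over the flats of `L` inside `H` above `Z` regroups the supersets `Y` of `Z`
  -- according to `Y ∩ H`
  suffices hg : ∀ Z ∈ {X ∈ L | X ⊆ H}, ∑ X ∈ {X ∈ L | X ⊆ H} with Z ⊆ X, g X = 0 from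
    eq_zero_of_sum_supersets_eq_zero hg X (mem_filter.2 ⟨hX, hXH⟩)
  intro Z hZ
  obtain ⟨hZL, hZH⟩ := mem_filter.1 hZ
  have hZne : Z.Nonempty := (mem_interPosetIn.1 hZL).2
  have hZW : Z ≠ W := fun h => hWH (h ▸ hZH)
  have hmaps : ∀ Y ∈ L.filter (Z ⊆ ·), Y ∩ H ∈ {X ∈ L | X ⊆ H}.filter (Z ⊆ ·) := by
    intro Y hY
    obtain ⟨hYL, hZY⟩ := mem_filter.1 hY
    have hZYH : Z ⊆ Y ∩ H := Set.subset_inter hZY hZH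
    exact mem_filter.2 ⟨mem_filter.2 ⟨inter_mem_interPosetIn_of_mem hYL hH (hZne.mono hZYH),
      Set.inter_subset_right⟩, hZYH⟩
  have hμZ := hμ Z hZL
  rw [if_neg hZW, ← sum_fiberwise_of_maps_to hmaps] at hμZ
  refine Eq.trans (sum_congr rfl fun X hX => ?_) hμZ
  rw [filter_filter]
  refine sum_congr (filter_congr fun Y _ => ?_) fun _ _ => rfl
  exact ⟨fun hYX => ⟨(mem_filter.1 hX).2.trans (hYX ▸ Set.inter_subset_left), hYX⟩, And.right⟩

end Mobius

section Geometry

variable {K V : Type} [Field K] [AddCommGroup V] [Module K V] {A : Finset (Set V)}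
  {H X Y : Set V}

theorem IsHyperplane.nonempty (hH : IsHyperplane K H) : H.Nonempty := by
  obtain ⟨f, c, hf, rfl⟩ := hH
  exact LinearMap.surjective hf c

theorem IsHyperplane.eq_mk' (hH : IsHyperplane K H) {p : V} (hp : p ∈ H) :
    ∃ f : Dual K V, f ≠ 0 ∧ H = AffineSubspace.mk' p (LinearMap.ker f) := by
  obtain ⟨f, c, hf, rfl⟩ := hH
  have hpc : f p = c := hp
  refine ⟨f, hf, Set.ext fun x => ?_⟩
  rw [SetLike.mem_coe, AffineSubspace.mem_mk', vsub_eq_sub, LinearMap.mem_ker, map_sub,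
    sub_eq_zero, hpc]
  rfl

theorem IsHyperplane.not_univ_subset (hH : IsHyperplane K H) : ¬ Set.univ ⊆ H := by
  obtain ⟨f, c, hf, rfl⟩ := hH
  obtain ⟨p, hp⟩ := LinearMap.surjective hf (c + 1)
  exact fun h => by simpa [hp] using h (Set.mem_univ p)

theorem exists_affineSubspace_of_mem_interPosetIn (hA : ∀ H ∈ A, IsHyperplane K H)
    (hX : X ∈ interPosetIn Set.univ A) : ∃ S : AffineSubspace K V, (S : Set V) = X := by
  obtain ⟨⟨T, hT, rfl⟩, -⟩ := mem_interPosetIn.1 hX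
  clear hX
  rw [Set.univ_inter]
  induction T using Finset.induction_on with
  | empty => exact ⟨⊤, by simp⟩
  | insert H T _ ih =>
    obtain ⟨p, hp⟩ := (hA H (hT (mem_insert_self H T))).nonempty
    obtain ⟨f, -, hHf⟩ := (hA H (hT (mem_insert_self H T))).eq_mk' hp
    obtain ⟨S, hS⟩ := ih ((subset_insert H T).trans hT)
    refine ⟨AffineSubspace.mk' p (LinearMap.ker f) ⊓ S, ?_⟩
    rw [set_biInter_insert, hHf, ← hS]
    rfl

theorem flatDim_coe (S : AffineSubspace K V) :
    flatDim K (S : Set V) = finrank K S.direction := by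
  rw [flatDim, AffineSubspace.affineSpan_coe]

theorem flatDim_univ : flatDim K (Set.univ : Set V) = finrank K V := by
  rw [← AffineSubspace.top_coe K V V, flatDim_coe, AffineSubspace.direction_top, finrank_top]

theorem flatDim_le_finrank [FiniteDimensional K V] (X : Set V) : flatDim K X ≤ finrank K V :=
  Submodule.finrank_le _

theorem rkIn_univ (X : Set V) : rkIn K Set.univ X = finrank K V - flatDim K X := by
  rw [rkIn, flatDim_univ]

theorem AffineSubspace.flatDim_lt_of_lt [FiniteDimensional K V] {S T : AffineSubspace K V}
    (hS : (S : Set V).Nonempty) (hST : S < T) :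
    flatDim K (S : Set V) < flatDim K (T : Set V) := by
  rw [flatDim_coe, flatDim_coe]
  exact Submodule.finrank_lt_finrank_of_lt (AffineSubspace.direction_lt_of_nonempty hST hS)

theorem flatDim_lt_of_ssubset [FiniteDimensional K V] (hA : ∀ H ∈ A, IsHyperplane K H)
    (hX : X ∈ interPosetIn Set.univ A) (hY : Y ∈ interPosetIn Set.univ A) (hXY : X ⊂ Y) :
    flatDim K X < flatDim K Y := by
  obtain ⟨S, rfl⟩ := exists_affineSubspace_of_mem_interPosetIn hA hX
  obtain ⟨T, rfl⟩ := exists_affineSubspace_of_mem_interPosetIn hA hY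
  exact AffineSubspace.flatDim_lt_of_lt (mem_interPosetIn.1 hX).2
    (SetLike.coe_ssubset_coe.1 hXY)

theorem flatDim_le_flatDim_inter_add_one [FiniteDimensional K V]
    (hA : ∀ H ∈ A, IsHyperplane K H) (hY : Y ∈ interPosetIn Set.univ A) (hH : IsHyperplane K H)
    (hne : (Y ∩ H).Nonempty) : flatDim K Y ≤ flatDim K (Y ∩ H) + 1 := by
  obtain ⟨S, rfl⟩ := exists_affineSubspace_of_mem_interPosetIn hA hY
  obtain ⟨p, hpS, hpH⟩ := hne
  obtain ⟨f, hf, rfl⟩ := hH.eq_mk' hpH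
  rw [show (S : Set V) ∩ AffineSubspace.mk' p (LinearMap.ker f) =
      (S ⊓ AffineSubspace.mk' p (LinearMap.ker f) : AffineSubspace K V) from rfl,
    flatDim_coe, flatDim_coe, AffineSubspace.direction_inf_of_mem_inf ⟨hpS, hpH⟩,
    AffineSubspace.direction_mk']
  have hsup := Submodule.finrank_sup_add_finrank_inf_eq S.direction (LinearMap.ker f)
  have hker := Dual.finrank_ker_add_one_of_ne_zero hf
  have hle := Submodule.finrank_le (S.direction ⊔ LinearMap.ker f)
  omega

theorem IsMobiusIn.neg_one_pow_rkIn_mul_nonneg [FiniteDimensional K V] {μ : Set V → ℤ}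
    (hA : ∀ H ∈ A, IsHyperplane K H) (hμ : IsMobiusIn Set.univ A μ)
    (hX : X ∈ interPosetIn Set.univ A) : 0 ≤ (-1) ^ rkIn K Set.univ X * μ X := by
  induction hr : rkIn K Set.univ X using Nat.strong_induction_on generalizing X with
  | _ r ih =>
  by_cases hXuniv : X = Set.univ
  · subst hXuniv
    rw [← hr, rkIn, Nat.sub_self, pow_zero, one_mul, hμ.apply_self Set.univ_nonempty]
    exact zero_le_one
  obtain ⟨H, hH, hXH⟩ := exists_mem_subset_of_mem_interPosetIn hX hXuniv
  have hweisner := hμ.sum_inter_eq_zero hH (hA H hH).not_univ_subset hX hXH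
  have hXmem : X ∈ {Y ∈ interPosetIn Set.univ A | Y ∩ H = X} :=
    mem_filter.2 ⟨hX, Set.inter_eq_left.2 hXH⟩
  rw [← add_sum_erase _ _ hXmem] at hweisner
  have hrk : ∀ Y ∈ ({Y ∈ interPosetIn Set.univ A | Y ∩ H = X}.erase X),
      Y ∈ interPosetIn Set.univ A ∧ rkIn K Set.univ Y + 1 = r := by
    intro Y hY
    obtain ⟨hYX, hY⟩ := mem_erase.1 hY
    obtain ⟨hYL, rfl⟩ := mem_filter.1 hY
    have hlt := flatDim_lt_of_ssubset hA hX hYL (Set.inter_subset_left.ssubset_of_ne hYX.symm)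
    have hle := flatDim_le_flatDim_inter_add_one hA hYL (hA H hH) (mem_interPosetIn.1 hX).2
    have := flatDim_le_finrank (K := K) Y
    refine ⟨hYL, ?_⟩
    rw [← hr, rkIn_univ, rkIn_univ]
    omega
  calc 0 ≤ ∑ Y ∈ {Y ∈ interPosetIn Set.univ A | Y ∩ H = X}.erase X,
        (-1) ^ rkIn K Set.univ Y * μ Y :=
        sum_nonneg fun Y hY => ih _ (by have := (hrk Y hY).2; omega) (hrk Y hY).1 rfl
    _ = (-1) ^ r * μ X := by
        rw [eq_neg_of_add_eq_zero_left hweisner, mul_neg, mul_sum, ← sum_neg_distrib]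
        refine sum_congr rfl fun Y hY => ?_
        rw [← (hrk Y hY).2, pow_succ]
        ring

end Geometry

section Generic

variable {K V : Type} [Field K] [AddCommGroup V] [Module K V] [FiniteDimensional K V]
  {A : Finset (Set V)} {F X Y : Set V} {μ μ' : Set V → ℤ}

namespace IsGenericFlat

theorem inter_nonempty_iff (hF : IsGenericFlat K (finrank K V - 1) A F) (hn : 0 < finrank K V)
    (hX : X ∈ interPosetIn Set.univ A) :
    (F ∩ X).Nonempty ↔ rkIn K Set.univ X ≠ finrank K V := by
  obtain ⟨hlow, hhigh⟩ := hF.2.2.2 X hX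
  have hd := flatDim_le_finrank (K := K) X
  rw [rkIn_univ] at hlow hhigh ⊢
  exact ⟨fun hne hrk => hne.ne_empty (hhigh (by omega)), fun hrk => (hlow (by omega)).1⟩

theorem flatDim_inter_add_one (hF : IsGenericFlat K (finrank K V - 1) A F) (hn : 0 < finrank K V)
    (hX : X ∈ interPosetIn Set.univ A) (hne : (F ∩ X).Nonempty) :
    flatDim K (F ∩ X) + 1 = flatDim K X := by
  obtain ⟨hlow, -⟩ := hF.2.2.2 X hX
  have hrk := (hF.inter_nonempty_iff hn hX).1 hne
  have hd := flatDim_le_finrank (K := K) X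
  rw [rkIn_univ] at hlow hrk
  have := (hlow (by omega)).2
  omega

theorem not_subset (hF : IsGenericFlat K (finrank K V - 1) A F) (hn : 0 < finrank K V)
    (hX : X ∈ interPosetIn Set.univ A) : ¬ X ⊆ F := by
  intro hXF
  rw [← Set.inter_eq_right] at hXF
  have h := hF.flatDim_inter_add_one hn hX (by rw [hXF]; exact (mem_interPosetIn.1 hX).2)
  rw [hXF] at h
  omega

theorem subset_of_inter_subset (hF : IsGenericFlat K (finrank K V - 1) A F)
    (hn : 0 < finrank K V) (hA : ∀ H ∈ A, IsHyperplane K H) (hX : X ∈ interPosetIn Set.univ A)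
    (hY : Y ∈ interPosetIn Set.univ A) (hne : (F ∩ X).Nonempty) (hXY : F ∩ X ⊆ Y) : X ⊆ Y := by
  have hFXY : F ∩ (X ∩ Y) = F ∩ X :=
    subset_antisymm (Set.inter_subset_inter_right F Set.inter_subset_left)
      (Set.subset_inter Set.inter_subset_left (Set.subset_inter Set.inter_subset_right hXY))
  have hXYL : X ∩ Y ∈ interPosetIn Set.univ A :=
    inter_mem_interPosetIn hX hY (hne.mono (hFXY ▸ Set.inter_subset_right))
  have hdim := hF.flatDim_inter_add_one hn hXYL (hFXY ▸ hne)
  rw [hFXY, hF.flatDim_inter_add_one hn hX hne] at hdim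
  by_contra hXY'
  have := flatDim_lt_of_ssubset hA hXYL hX
    (Set.inter_subset_left.ssubset_of_not_subset fun h => hXY' (h.trans Set.inter_subset_right))
  omega

theorem injOn_inter (hF : IsGenericFlat K (finrank K V - 1) A F) (hn : 0 < finrank K V)
    (hA : ∀ H ∈ A, IsHyperplane K H) :
    Set.InjOn (F ∩ ·) ({X ∈ interPosetIn Set.univ A | (F ∩ X).Nonempty} : Finset (Set V)) := by
  intro X hX Y hY hXY
  replace hXY : F ∩ X = F ∩ Y := hXY
  obtain ⟨hXL, hXne⟩ := mem_filter.1 hX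
  obtain ⟨hYL, hYne⟩ := mem_filter.1 hY
  exact subset_antisymm
    (hF.subset_of_inter_subset hn hA hXL hYL hXne (hXY ▸ Set.inter_subset_right))
    (hF.subset_of_inter_subset hn hA hYL hXL hYne (hXY ▸ Set.inter_subset_right))

theorem disjoint_image_inter (hF : IsGenericFlat K (finrank K V - 1) A F) (hn : 0 < finrank K V)
    {s : Finset (Set V)} (hs : s ⊆ interPosetIn Set.univ A) (t : Finset (Set V)) :
    Disjoint s (t.image (F ∩ ·)) := by
  refine disjoint_left.2 fun Z hZ hZF => ?_
  obtain ⟨X, -, rfl⟩ := mem_image.1 hZF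
  exact hF.not_subset hn (hs hZ) Set.inter_subset_left

theorem filter_superset_insert (hF : IsGenericFlat K (finrank K V - 1) A F)
    (hn : 0 < finrank K V) (hX : X ∈ interPosetIn Set.univ A) :
    {Y ∈ interPosetIn Set.univ (insert F A) | X ⊆ Y} =
      {Y ∈ interPosetIn Set.univ A | X ⊆ Y} := by
  rw [interPosetIn_insert, filter_union, union_eq_left]
  intro Z hZ
  obtain ⟨hZ, hXZ⟩ := mem_filter.1 hZ
  obtain ⟨Y, -, rfl⟩ := mem_image.1 hZ
  exact absurd (hXZ.trans Set.inter_subset_left) (hF.not_subset hn hX)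

theorem filter_superset_inter_insert (hF : IsGenericFlat K (finrank K V - 1) A F)
    (hn : 0 < finrank K V) (hA : ∀ H ∈ A, IsHyperplane K H) (hX : X ∈ interPosetIn Set.univ A)
    (hne : (F ∩ X).Nonempty) :
    {Z ∈ interPosetIn Set.univ (insert F A) | F ∩ X ⊆ Z} =
      {Y ∈ {Y ∈ interPosetIn Set.univ A | (F ∩ Y).Nonempty} | X ⊆ Y} ∪
        {Y ∈ {Y ∈ interPosetIn Set.univ A | (F ∩ Y).Nonempty} | X ⊆ Y}.image (F ∩ ·) := by
  rw [interPosetIn_insert, filter_union, filter_image]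
  congr 1
  · ext Y
    simp only [mem_filter]
    refine ⟨fun ⟨hY, hFXY⟩ => ?_, fun ⟨⟨hY, _⟩, hXY⟩ => ⟨hY, Set.inter_subset_right.trans hXY⟩⟩
    have hXY := hF.subset_of_inter_subset hn hA hX hY hne hFXY
    exact ⟨⟨hY, hne.mono (Set.inter_subset_inter_right F hXY)⟩, hXY⟩
  · congr 1
    refine filter_congr fun Y hY => ⟨fun hXY => ?_, Set.inter_subset_inter_right F⟩
    obtain ⟨hYL, -⟩ := mem_filter.1 hY
    exact hF.subset_of_inter_subset hn hA hX hYL hne (hXY.trans Set.inter_subset_right)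

theorem mobius_insert_eq (hF : IsGenericFlat K (finrank K V - 1) A F) (hn : 0 < finrank K V)
    (hμ : IsMobiusIn Set.univ A μ) (hμ' : IsMobiusIn Set.univ (insert F A) μ') :
    ∀ X ∈ interPosetIn Set.univ A, μ' X = μ X :=
  hμ.eq_of_filter_superset_eq hμ' fun _ hX => hF.filter_superset_insert hn hX

theorem mobius_insert_inter (hF : IsGenericFlat K (finrank K V - 1) A F) (hn : 0 < finrank K V)
    (hA : ∀ H ∈ A, IsHyperplane K H) (hμ : IsMobiusIn Set.univ A μ)
    (hμ' : IsMobiusIn Set.univ (insert F A) μ') :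
    ∀ X ∈ {X ∈ interPosetIn Set.univ A | (F ∩ X).Nonempty}, μ' (F ∩ X) = -μ X := by
  suffices h : ∀ X ∈ {X ∈ interPosetIn Set.univ A | (F ∩ X).Nonempty},
      μ X + μ' (F ∩ X) = 0 from fun X hX => eq_neg_of_add_eq_zero_right (h X hX)
  refine eq_zero_of_sum_supersets_eq_zero fun X hX => ?_
  obtain ⟨hXL, hne⟩ := mem_filter.1 hX
  have hFX : F ∩ X ∈ interPosetIn Set.univ (insert F A) := by
    rw [interPosetIn_insert]
    exact mem_union_right _ (mem_image_of_mem _ hX)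
  have hFXuniv : F ∩ X ≠ Set.univ := fun h => hF.not_subset hn
    (self_mem_interPosetIn (A := A) Set.univ_nonempty) (h ▸ Set.inter_subset_left)
  have h := hμ' (F ∩ X) hFX
  rw [if_neg hFXuniv, hF.filter_superset_inter_insert hn hA hXL hne,
    sum_union (hF.disjoint_image_inter hn ((filter_subset _ _).trans (filter_subset _ _)) _),
    sum_image ((hF.injOn_inter hn hA).mono (coe_subset.2 (filter_subset _ _)))] at h
  rw [sum_add_distrib, ← h]
  refine congrArg (· + _) (sum_congr rfl fun Y hY => (hF.mobius_insert_eq hn hμ hμ' Y ?_).symm)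
  exact (mem_filter.1 (mem_filter.1 hY).1).1

theorem sum_mobius_insert (hF : IsGenericFlat K (finrank K V - 1) A F)
    (hA : ∀ H ∈ A, IsHyperplane K H) (hμ : IsMobiusIn Set.univ A μ)
    (hμ' : IsMobiusIn Set.univ (insert F A) μ') :
    ∑ Z ∈ interPosetIn Set.univ (insert F A), μ' Z =
      ∑ X ∈ interPosetIn Set.univ A with rkIn K Set.univ X = finrank K V, μ X := by
  rcases (finrank K V).eq_zero_or_pos with hn | hn
  · have : Subsingleton V := finrank_zero_iff.1 hn
    simp [interPosetIn_univ_of_subsingleton, filter_singleton, rkIn, hn, hμ.apply_self,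
      hμ'.apply_self]
  rw [interPosetIn_insert, sum_union (hF.disjoint_image_inter hn subset_rfl _),
    sum_image (hF.injOn_inter hn hA), sum_congr rfl (hF.mobius_insert_eq hn hμ hμ'),
    sum_congr rfl (hF.mobius_insert_inter hn hA hμ hμ'), sum_neg_distrib,
    ← sum_filter_add_sum_filter_not (interPosetIn Set.univ A) (fun X => (F ∩ X).Nonempty),
    add_neg_cancel_comm]
  exact sum_congr (filter_congr fun X hX => by rw [hF.inter_nonempty_iff hn hX, not_not])
    fun _ _ => rfl

end IsGenericFlat

end Generic

section PoincarePolynomial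

variable {K V : Type} [Field K] [AddCommGroup V] [Module K V]

theorem coeff_poinIn (W : Set V) (A : Finset (Set V)) (μ : Set V → ℤ) (n : ℕ) :
    (poinIn K W A μ).coeff n = (-1) ^ n * ∑ X ∈ interPosetIn W A with rkIn K W X = n, μ X := by
  rw [poinIn, Polynomial.finsetSum_coeff, sum_filter, mul_sum]
  refine sum_congr rfl fun X _ => ?_
  rw [neg_pow, ← Polynomial.C_1, ← Polynomial.C_neg, ← Polynomial.C_pow, ← mul_assoc,
    ← Polynomial.C_mul, Polynomial.coeff_C_mul_X_pow]
  rcases eq_or_ne (rkIn K W X) n with h | h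
  · simp [h, mul_comm]
  · simp [h, h.symm]

theorem eval_neg_one_poinIn (W : Set V) (A : Finset (Set V)) (μ : Set V → ℤ) :
    (poinIn K W A μ).eval (-1) = ∑ X ∈ interPosetIn W A, μ X := by
  simp [poinIn, Polynomial.eval_finsetSum]

end PoincarePolynomial

theorem top_betti_eq_beta_general {ℓ : ℕ} (A : Finset (Set (Fin ℓ → ℝ)))
    (hA : ∀ H ∈ A, IsHyperplane ℝ H)
    (F : Set (Fin ℓ → ℝ)) (hF : IsGenericFlat ℝ (ℓ - 1) A F)
    (μ μ' : Set (Fin ℓ → ℝ) → ℤ)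
    (hμ : IsMobiusIn Set.univ A μ)
    (hμ' : IsMobiusIn Set.univ (insert F A) μ') :
    (poinIn ℝ Set.univ A μ).coeff ℓ
      = (((poinIn ℝ Set.univ (insert F A) μ').eval (-1)).natAbs : ℤ) := by
  have hsum := IsGenericFlat.sum_mobius_insert (by rwa [finrank_fin_fun]) hA hμ hμ'
  rw [finrank_fin_fun] at hsum
  have hsign :
      0 ≤ (-1) ^ ℓ * ∑ X ∈ interPosetIn Set.univ A with rkIn ℝ Set.univ X = ℓ, μ X := by
    rw [mul_sum]
    refine sum_nonneg fun X hX => ?_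
    obtain ⟨hXL, hrk⟩ := mem_filter.1 hX
    exact hrk ▸ hμ.neg_one_pow_rkIn_mul_nonneg hA hXL
  rw [coeff_poinIn, eval_neg_one_poinIn, hsum, Int.natCast_natAbs, ← abs_of_nonneg hsign,
    abs_mul, abs_neg_one_pow, one_mul]

/-- For an essential finite arrangement `A` of affine hyperplanes in
`ℝ^ℓ` and a generic affine hyperplane `F^{ℓ-1}`, one has
`b_ℓ(A) = β(A ∪ {F^{ℓ-1}})`, where `β` is the absolute value of the Poincaré
polynomial evaluated at `-1`. -/
theorem top_betti_eq_beta {ℓ : ℕ} (A : Finset (Set (Fin ℓ → ℝ)))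
    (hA : ∀ H ∈ A, IsHyperplane ℝ H)
    (hess : ∃ X ∈ interPosetIn Set.univ A, rkIn ℝ Set.univ X = ℓ)
    (F : Set (Fin ℓ → ℝ)) (hF : IsGenericFlat ℝ (ℓ - 1) A F)
    (μ μ' : Set (Fin ℓ → ℝ) → ℤ)
    (hμ : IsMobiusIn Set.univ A μ)
    (hμ' : IsMobiusIn Set.univ (insert F A) μ') :
    (poinIn ℝ Set.univ A μ).coeff ℓ
      = (((poinIn ℝ Set.univ (insert F A) μ').eval (-1)).natAbs : ℤ) :=
  top_betti_eq_beta_general A hA F hF μ μ' hμ hμ'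
end

section
/- Let U be an open neighborhood of 0 in ℂ^n and let f : U → ℂ be holomorphic with f(0) ≠ 0, and suppose 0 is a critical point of f (the complex derivative of f vanishes at 0). Then the symmetric real bilinear form given by the second real Fréchet derivative of z ↦ |f(z)|² at 0 (a bilinear form on ℂ^n viewed as a 2n-dimensional real vector space) is nondegenerate if and only if the symmetric complex bilinear form given by the second complex Fréchet derivative of f at 0 is nondegenerate. -/
/-!
By the product rule, the real Hessian of `‖f‖² = ⟪f, f⟫` at `0` is
`2 ⟪f 0, D²f (u, v)⟫ + 2 ⟪Df u, Df v⟫`, and the second term vanishes at a critical point.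
As `⟪a, b⟫ = Re (b · conj a)` on `ℂ` and `v ↦ D²f (u, v)` is `ℂ`-linear, testing on `v` and
`I • v` shows that the real part of `D²f (u, ·) · conj (f 0)` vanishes identically only if
`D²f (u, ·)` does, because `f 0 ≠ 0`.

The analytic input is that `Df` is again complex differentiable. On the complex line through
`z` in direction `v`, Cauchy's formula writes `Df z v` as a circle integral of `f`, which can be
differentiated in `z` under the integral sign since the Cauchy estimates bound `Df` near `0`.
-/

open Metric Set Filter MeasureTheory
open scoped Topology Real Interval ComplexConjugate

theorem differentiableAt_clm_apply_iff {𝕜 D E F : Type*} [NontriviallyNormedField 𝕜]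
    [CompleteSpace 𝕜] [NormedAddCommGroup D] [NormedSpace 𝕜 D] [NormedAddCommGroup E]
    [NormedSpace 𝕜 E] [FiniteDimensional 𝕜 E] [NormedAddCommGroup F] [NormedSpace 𝕜 F]
    {f : D → E →L[𝕜] F} {x : D} :
    DifferentiableAt 𝕜 f x ↔ ∀ y, DifferentiableAt 𝕜 (fun x => f x y) x := by
  refine ⟨fun h y => h.clm_apply (differentiableAt_const y), fun h => ?_⟩
  let d := Module.finrank 𝕜 E
  let e₁ : E ≃L[𝕜] (Fin d → 𝕜) :=
    ContinuousLinearEquiv.ofFinrankEq (Module.finrank_fin_fun 𝕜).symm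
  let e₂ := (e₁.arrowCongr (1 : F ≃L[𝕜] F)).trans (ContinuousLinearEquiv.piRing (Fin d))
  rw [← e₂.comp_differentiableAt_iff]
  exact differentiableAt_pi.mpr fun i => h _

theorem ContinuousLinearMap.eq_zero_of_forall_re_apply_eq_zero {E : Type*} [NormedAddCommGroup E]
    [NormedSpace ℂ E] {φ : E →L[ℂ] ℂ} (h : ∀ w, (φ w).re = 0) : φ = 0 := by
  ext w
  refine Complex.ext (h w) ?_
  simpa [Complex.mul_re] using h (Complex.I • w)

theorem DifferentiableAt.hasDerivAt_comp_add_smul {𝕜 E F : Type*} [NontriviallyNormedField 𝕜]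
    [NormedAddCommGroup E] [NormedSpace 𝕜 E] [NormedAddCommGroup F] [NormedSpace 𝕜 F]
    {f : E → F} {x : E} (hf : DifferentiableAt 𝕜 f x) (v : E) :
    HasDerivAt (fun t : 𝕜 => f (x + t • v)) (fderiv 𝕜 f x v) 0 := by
  have hline : HasDerivAt (fun t : 𝕜 => x + t • v) v 0 := by
    simpa using ((hasDerivAt_id (0 : 𝕜)).smul_const v).const_add x
  exact hf.hasFDerivAt.comp_hasDerivAt_of_eq 0 hline (by simp)

theorem fderiv_fderiv_norm_sq_apply_of_fderiv_eq_zero {E F : Type*} [NormedAddCommGroup E]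
    [NormedSpace ℝ E] [NormedAddCommGroup F] [InnerProductSpace ℝ F] {g : E → F} {x : E}
    {g'' : E →L[ℝ] E →L[ℝ] F}
    (hg : ∀ᶠ z in 𝓝 x, DifferentiableAt ℝ g z) (hg'' : HasFDerivAt (fderiv ℝ g) g'' x)
    (hcrit : fderiv ℝ g x = 0) (u w : E) :
    fderiv ℝ (fderiv ℝ fun z => ‖g z‖ ^ 2) x u w = 2 * inner ℝ (g x) (g'' u w) := by
  have hD : fderiv ℝ (fun z => ‖g z‖ ^ 2) =ᶠ[𝓝 x]
      fun z => 2 • (innerSL ℝ (g z)).comp (fderiv ℝ g z) := by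
    filter_upwards [hg] with z hz using hz.hasFDerivAt.norm_sq.fderiv
  have hinner : HasFDerivAt (fun z => innerSL ℝ (g z)) (0 : E →L[ℝ] F →L[ℝ] ℝ) x := by
    have h := (innerSL ℝ).hasFDerivAt.comp x hg.self_of_nhds.hasFDerivAt
    rwa [hcrit, ContinuousLinearMap.comp_zero] at h
  rw [hD.fderiv_eq, ((hinner.clm_comp hg'').fun_const_smul 2).fderiv]
  simp [two_mul]

theorem hasFDerivAt_fderiv_restrictScalars {𝕜 𝕜' E F : Type*} [NontriviallyNormedField 𝕜]
    [NontriviallyNormedField 𝕜'] [NormedAlgebra 𝕜 𝕜'] [NormedAddCommGroup E] [NormedSpace 𝕜 E]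
    [NormedSpace 𝕜' E] [IsScalarTower 𝕜 𝕜' E] [NormedAddCommGroup F] [NormedSpace 𝕜 F]
    [NormedSpace 𝕜' F] [IsScalarTower 𝕜 𝕜' F] {f : E → F} {x : E}
    (hf : ∀ᶠ z in 𝓝 x, DifferentiableAt 𝕜' f z) (hf' : DifferentiableAt 𝕜' (fderiv 𝕜' f) x) :
    HasFDerivAt (fderiv 𝕜 f) ((ContinuousLinearMap.restrictScalarsL 𝕜' E F 𝕜 𝕜).comp
      ((fderiv 𝕜' (fderiv 𝕜' f) x).restrictScalars 𝕜)) x := by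
  have hD : fderiv 𝕜 f =ᶠ[𝓝 x] fun z =>
      ContinuousLinearMap.restrictScalarsL 𝕜' E F 𝕜 𝕜 (fderiv 𝕜' f z) := by
    filter_upwards [hf] with z hz using hz.fderiv_restrictScalars 𝕜
  exact ((ContinuousLinearMap.restrictScalarsL 𝕜' E F 𝕜 𝕜).hasFDerivAt.comp x
    (hf'.hasFDerivAt.restrictScalars 𝕜)).congr_of_eventuallyEq hD

section Holomorphic

variable {E F : Type*} [NormedAddCommGroup E] [NormedSpace ℂ E] [NormedAddCommGroup F]
  [NormedSpace ℂ F] {f : E → F} {U : Set E} {x : E}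

theorem norm_fderiv_apply_le_of_forall_mem_sphere_norm_le {c : E} {R C : ℝ} (hR : 0 < R)
    (hd : DiffContOnCl ℂ f (ball c R)) (hC : ∀ z ∈ sphere c R, ‖f z‖ ≤ C) (u : E) :
    ‖fderiv ℂ f c u‖ ≤ C / R * ‖u‖ := by
  rcases eq_or_ne u 0 with rfl | hu
  · simp
  have hu' : 0 < ‖u‖ := norm_pos_iff.2 hu
  have hmaps : MapsTo (fun t : ℂ => c + t • u) (ball 0 (R / ‖u‖)) (ball c R) := fun t ht => by
    simpa [norm_smul, lt_div_iff₀ hu'] using ht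
  have hsphere : ∀ t ∈ sphere (0 : ℂ) (R / ‖u‖), ‖f (c + t • u)‖ ≤ C := fun t ht =>
    hC _ (by simpa [norm_smul, eq_div_iff hu'.ne'] using ht)
  have hline : DiffContOnCl ℂ (fun t : ℂ => c + t • u) (ball 0 (R / ‖u‖)) :=
    (by fun_prop : Differentiable ℂ fun t : ℂ => c + t • u).diffContOnCl
  have h := Complex.norm_deriv_le_of_forall_mem_sphere_norm_le (div_pos hR hu')
    (hd.comp hline hmaps) hsphere
  have hc : DifferentiableAt ℂ f c := hd.differentiableAt isOpen_ball (mem_ball_self hR)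
  rwa [Function.comp_def, (hc.hasDerivAt_comp_add_smul u).deriv, div_div_eq_mul_div,
    mul_div_right_comm] at h

theorem fderiv_apply_eq_circleIntegral [CompleteSpace F] (hU : IsOpen U)
    (hf : DifferentiableOn ℂ f U) {v : E} {r : ℝ} (hr : 0 < r)
    (hxv : ∀ ζ ∈ closedBall (0 : ℂ) r, x + ζ • v ∈ U) :
    fderiv ℂ f x v = (2 * π * Complex.I)⁻¹ • ∮ ζ in C(0, r), (ζ ^ 2)⁻¹ • f (x + ζ • v) := by
  have hline : Continuous fun ζ : ℂ => x + ζ • v := by fun_prop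
  have hg : DifferentiableOn ℂ (fun ζ : ℂ => f (x + ζ • v)) ((fun ζ : ℂ => x + ζ • v) ⁻¹' U) :=
    hf.comp (by fun_prop : Differentiable ℂ fun ζ : ℂ => x + ζ • v).differentiableOn
      (mapsTo_preimage _ _)
  have hx : DifferentiableAt ℂ f x :=
    hf.differentiableAt (hU.mem_nhds (by simpa using hxv 0 (mem_closedBall_self hr.le)))
  rw [← (hx.hasDerivAt_comp_add_smul v).deriv,
    ← Complex.two_pi_I_inv_smul_circleIntegral_sub_sq_inv_smul_of_differentiable
      (hU.preimage hline) hxv hg (mem_ball_self hr)]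
  simp

theorem exists_ball_subset_forall_norm_fderiv_le (hU : IsOpen U) (hf : DifferentiableOn ℂ f U)
    (hx : x ∈ U) : ∃ ρ > 0, ball x ρ ⊆ U ∧ ∃ K, ∀ w ∈ ball x ρ, ‖fderiv ℂ f w‖ ≤ K := by
  have hbdd : ∀ᶠ z in 𝓝 x, ‖f z‖ < ‖f x‖ + 1 :=
    (hf.differentiableAt (hU.mem_nhds hx)).continuousAt.norm.eventually
      (gt_mem_nhds (lt_add_one _))
  obtain ⟨ε, hε, hball⟩ := Metric.eventually_nhds_iff_ball.1
    (Eventually.and (hU.mem_nhds hx) hbdd)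
  refine ⟨ε / 2, by positivity, fun z hz => (hball z (ball_subset_ball (by linarith) hz)).1,
    (‖f x‖ + 1) / (ε / 4), fun w hw => ?_⟩
  have hsub : closedBall w (ε / 4) ⊆ ball x ε := closedBall_subset_ball' (by
    rw [mem_ball] at hw; linarith)
  have hd : DiffContOnCl ℂ f (ball w (ε / 4)) := by
    refine DifferentiableOn.diffContOnCl ?_
    rw [closure_ball w (by positivity)]
    exact hf.mono fun z hz => (hball z (hsub hz)).1
  refine ContinuousLinearMap.opNorm_le_bound _ (by positivity) fun u => ?_
  exact norm_fderiv_apply_le_of_forall_mem_sphere_norm_le (by positivity) hd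
    (fun z hz => (hball z (hsub (sphere_subset_closedBall hz))).2.le) u

theorem differentiableAt_circleIntegral_comp_add_smul [FiniteDimensional ℂ E] [CompleteSpace F]
    [SecondCountableTopology F] {s : Set E} (hs : s ∈ 𝓝 x) {r K : ℝ} (hr : 0 < r) (v : E)
    (hd : ∀ z ∈ s, ∀ θ : ℝ, DifferentiableAt ℂ f (z + circleMap 0 r θ • v))
    (hK : ∀ z ∈ s, ∀ θ : ℝ, ‖fderiv ℂ f (z + circleMap 0 r θ • v)‖ ≤ K) :
    DifferentiableAt ℂ (fun z => ∮ ζ in C(0, r), (ζ ^ 2)⁻¹ • f (z + ζ • v)) x := by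
  borelize E
  set c : ℝ → ℂ := fun θ => deriv (circleMap 0 r) θ * (circleMap 0 r θ ^ 2)⁻¹
  have hc : Continuous c := by
    simp only [c, deriv_circleMap]
    exact (by fun_prop : Continuous _).mul (((continuous_circleMap 0 r).pow 2).inv₀
      fun θ => pow_ne_zero 2 (circleMap_ne_center hr.ne'))
  have hc_norm : ∀ θ, ‖c θ‖ = r⁻¹ := fun θ => by
    simp [c, deriv_circleMap, abs_of_pos hr, sq]
    field_simp
  have hline : ∀ z : E, Continuous fun θ => z + circleMap 0 r θ • v := fun z => by fun_prop
  have hF_cont : ∀ z ∈ s, Continuous fun θ => c θ • f (z + circleMap 0 r θ • v) := fun z hz =>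
    hc.smul (continuous_iff_continuousAt.2 fun θ =>
      ContinuousAt.comp (g := f) (hd z hz θ).continuousAt (hline z).continuousAt)
  -- `E →L[ℂ] F` is second countable, so the Borel measurable `fderiv ℂ f` is strongly measurable.
  have hF'_meas : AEStronglyMeasurable
      (fun θ => c θ • fderiv ℂ f (x + circleMap 0 r θ • v)) (volume.restrict (Ι 0 (2 * π))) :=
    hc.aestronglyMeasurable.smul
      ((measurable_fderiv ℂ f).comp (hline x).measurable).aestronglyMeasurable
  have h_bound : ∀ z ∈ s, ∀ θ, ‖c θ • fderiv ℂ f (z + circleMap 0 r θ • v)‖ ≤ r⁻¹ * K :=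
    fun z hz θ => by
      rw [norm_smul, hc_norm]
      exact mul_le_mul_of_nonneg_left (hK z hz θ) (inv_nonneg.2 hr.le)
  have h_diff : ∀ z ∈ s, ∀ θ, HasFDerivAt (fun z => c θ • f (z + circleMap 0 r θ • v))
      (c θ • fderiv ℂ f (z + circleMap 0 r θ • v)) z := fun z hz θ => by
    have h := (hd z hz θ).hasFDerivAt.comp z ((hasFDerivAt_id z).add_const (circleMap 0 r θ • v))
    rw [ContinuousLinearMap.comp_id] at h
    exact h.const_smul (c θ)
  have h := intervalIntegral.hasFDerivAt_integral_of_dominated_of_fderiv_le hs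
    (eventually_of_mem hs fun z hz => (hF_cont z hz).aestronglyMeasurable)
    ((hF_cont x (mem_of_mem_nhds hs)).intervalIntegrable _ _) hF'_meas
    (ae_of_all _ fun θ _ z hz => h_bound z hz θ) intervalIntegrable_const
    (ae_of_all _ fun θ _ z hz => h_diff z hz θ)
  simpa only [circleIntegral, c, smul_smul] using h.differentiableAt

theorem DifferentiableOn.differentiableAt_fderiv_apply [FiniteDimensional ℂ E] [CompleteSpace F]
    [SecondCountableTopology F] (hU : IsOpen U) (hf : DifferentiableOn ℂ f U) (hx : x ∈ U)
    (v : E) : DifferentiableAt ℂ (fun z => fderiv ℂ f z v) x := by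
  obtain ⟨ρ, hρ, hρU, K, hK⟩ := exists_ball_subset_forall_norm_fderiv_le hU hf hx
  set r := ρ / (2 * (‖v‖ + 1))
  have hr : 0 < r := by positivity
  have hmem : ∀ z ∈ ball x (ρ / 2), ∀ ζ ∈ closedBall (0 : ℂ) r, z + ζ • v ∈ ball x ρ := by
    intro z hz ζ hζ
    have hζv : ‖ζ • v‖ ≤ ρ / 2 := by
      rw [norm_smul]
      calc ‖ζ‖ * ‖v‖ ≤ r * (‖v‖ + 1) := by
            gcongr
            · simpa using hζ
            · linarith
        _ = ρ / 2 := by simp only [r]; field_simp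
    rw [mem_ball_iff_norm] at hz ⊢
    calc ‖z + ζ • v - x‖ = ‖(z - x) + ζ • v‖ := by rw [sub_add_eq_add_sub]
      _ ≤ ‖z - x‖ + ‖ζ • v‖ := norm_add_le _ _
      _ < ρ := by linarith
  have hs := ball_mem_nhds x (half_pos hρ)
  have hcirc : ∀ z ∈ ball x (ρ / 2), ∀ θ, z + circleMap 0 r θ • v ∈ ball x ρ := fun z hz θ =>
    hmem z hz _ (circleMap_mem_closedBall 0 hr.le θ)
  have hint := differentiableAt_circleIntegral_comp_add_smul hs hr v
    (fun z hz θ => hf.differentiableAt (hU.mem_nhds (hρU (hcirc z hz θ))))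
    (fun z hz θ => hK _ (hcirc z hz θ))
  refine (hint.const_smul (2 * π * Complex.I)⁻¹).congr_of_eventuallyEq ?_
  filter_upwards [hs] with z hz
  exact fderiv_apply_eq_circleIntegral hU hf hr fun ζ hζ => hρU (hmem z hz ζ hζ)

theorem DifferentiableOn.fderiv_of_isOpen [FiniteDimensional ℂ E] [CompleteSpace F]
    [SecondCountableTopology F] (hU : IsOpen U) (hf : DifferentiableOn ℂ f U) :
    DifferentiableOn ℂ (fderiv ℂ f) U := fun _ hx =>
  (differentiableAt_clm_apply_iff.2 (hf.differentiableAt_fderiv_apply hU hx))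
    |>.differentiableWithinAt

end Holomorphic

/-- Let `f` be holomorphic on an open neighborhood `U` of `0` in
`ℂ^n` with `f 0 ≠ 0`, and suppose `0` is a critical point of `f`.  Then the second
real Fréchet derivative of `z ↦ |f z|²` at `0` (a symmetric real bilinear form on
`ℂ^n` viewed as a `2n`-dimensional real vector space) is nondegenerate if and only
if the second complex Fréchet derivative of `f` at `0` is nondegenerate. -/
theorem nondegenerate_hessian_of_abs_sq {n : ℕ} (U : Set (Fin n → ℂ)) (hU : IsOpen U)
    (h0 : (0 : Fin n → ℂ) ∈ U) (f : (Fin n → ℂ) → ℂ)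
    (hf : DifferentiableOn ℂ f U) (hf0 : f 0 ≠ 0)
    (hcrit : fderiv ℂ f 0 = 0) :
    ((∀ u : Fin n → ℂ,
        (∀ v : Fin n → ℂ, fderiv ℝ (fderiv ℝ fun z => ‖f z‖ ^ 2) 0 u v = 0) → u = 0) ↔
      (∀ u : Fin n → ℂ,
        (∀ v : Fin n → ℂ, fderiv ℂ (fderiv ℂ f) 0 u v = 0) → u = 0)) := by
  set B := fderiv ℂ (fderiv ℂ f) 0
  have hf_near : ∀ᶠ z in 𝓝 (0 : Fin n → ℂ), DifferentiableAt ℂ f z :=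
    eventually_of_mem (hU.mem_nhds h0) fun z hz => hf.differentiableAt (hU.mem_nhds hz)
  have hD2 : HasFDerivAt (fderiv ℝ f) _ 0 := hasFDerivAt_fderiv_restrictScalars (𝕜 := ℝ) hf_near
    ((hf.fderiv_of_isOpen hU).differentiableAt (hU.mem_nhds h0))
  have hcrit_real : fderiv ℝ f 0 = 0 := by
    rw [hf_near.self_of_nhds.fderiv_restrictScalars ℝ, hcrit,
      ContinuousLinearMap.restrictScalars_zero]
  have hHess : ∀ u v, fderiv ℝ (fderiv ℝ fun z => ‖f z‖ ^ 2) 0 u v =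
      2 * (B u v * conj (f 0)).re := fun u v => by
    rw [fderiv_fderiv_norm_sq_apply_of_fderiv_eq_zero
      (hf_near.mono fun z hz => hz.restrictScalars ℝ) hD2 hcrit_real u v, Complex.inner]
    rfl
  refine ⟨fun hH u hu => hH u fun v => by simp [hHess, hu v], fun hnondeg u hu => hnondeg u
    fun v => ?_⟩
  have hφ : conj (f 0) • B u = 0 := ContinuousLinearMap.eq_zero_of_forall_re_apply_eq_zero
    fun v => by simpa [hHess, mul_comm] using hu v
  simpa [hf0] using congr($hφ v)
end

section
/- Let U be an open neighborhood of 0 in ℂ^n and let f : U → ℂ be holomorphic with f(0) ≠ 0. Suppose 0 is a nondegenerate critical point of the real-valued function z ↦ |f(z)|² (its real Fréchet derivative vanishes at 0 and its second real Fréchet derivative at 0 is a nondegenerate symmetric bilinear form on ℂ^n viewed as a 2n-dimensional real vector space). Then the Morse index at 0 equals n: the maximal dimension of a real subspace of ℂ^n on which the Hessian bilinear form is negative definite is n (and likewise the maximal dimension of a subspace on which it is positive definite is n). -/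
/-!
Write `g = ‖f‖²` and `H` for its real Hessian at `0`. On a complex line `t ↦ t • u` the function
`ψ t = f (t • u)` is holomorphic with `ψ 0 ≠ 0`, and `0` is a critical point of `‖ψ‖²`, which forces
`ψ' 0 = 0`. Hence the Hessian of `‖ψ‖²` at `0` is `(a, b) ↦ 2 ⟪ψ 0, ψ'' 0 * a * b⟫`, a complex
bilinear expression, so `H (I • u) (I • u) = -H u u`. Multiplication by `I` is therefore an isometry
from the quadratic form `Q u = H u u` onto `-Q`, so `Q` has as many positive as negative directions;
as `Q` is nondegenerate they add up to `dim_ℝ ℂⁿ = 2n`.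
-/

open Filter Topology Complex ComplexConjugate Module QuadraticMap

namespace LinearMap.BilinForm

variable {K M : Type*} [Field K] [NeZero (2 : K)] [AddCommGroup M] [Module K M]

theorem radical_toQuadraticMap_eq_bot {B : LinearMap.BilinForm K M} (hB : B.IsSymm)
    (hsep : B.SeparatingLeft) : B.toQuadraticMap.radical = ⊥ := by
  refine eq_bot_iff.2 fun m hm => hsep m fun y => ?_
  have hpolar := LinearMap.congr_fun (mem_ker.1 (radical_le_ker_polarBilin hm)) y
  rw [polarBilin_apply_apply, BilinMap.polar_toQuadraticMap, hB.eq y m] at hpolar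
  simpa [← two_mul, two_ne_zero] using hpolar

end LinearMap.BilinForm

namespace QuadraticForm

section LinearOrder

variable {R M : Type*} [CommRing R] [LinearOrder R] [AddCommGroup M] [Module R M]
  (Q : QuadraticForm R M)

theorem posDef_restrict_iff {V : Submodule R M} :
    (Q.restrict V).PosDef ↔ ∀ w ∈ V, w ≠ 0 → 0 < Q w := by
  simp [PosDef]

variable [StrongRankCondition R] [Module.Finite R M]

theorem isGreatest_finrank_posDef :
    (∃ V : Submodule R M, finrank R V = sigPos Q ∧ ∀ w ∈ V, w ≠ 0 → 0 < Q w) ∧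
      ∀ V : Submodule R M, (∀ w ∈ V, w ≠ 0 → 0 < Q w) → finrank R V ≤ sigPos Q := by
  simp only [← posDef_restrict_iff]
  exact ⟨exists_finrank_eq_sigPos_and_posDef Q, fun V => le_sigPos_of_posDef Q⟩

theorem isGreatest_finrank_negDef [IsOrderedRing R] :
    (∃ V : Submodule R M, finrank R V = sigNeg Q ∧ ∀ w ∈ V, w ≠ 0 → Q w < 0) ∧
      ∀ V : Submodule R M, (∀ w ∈ V, w ≠ 0 → Q w < 0) → finrank R V ≤ sigNeg Q := by
  simpa only [neg_apply, neg_pos, sigPos_neg] using isGreatest_finrank_posDef (-Q)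

end LinearOrder

variable {𝕜 M : Type*} [Field 𝕜] [LinearOrder 𝕜] [IsStrictOrderedRing 𝕜] [AddCommGroup M]
  [Module 𝕜 M] [FiniteDimensional 𝕜 M] {Q : QuadraticForm 𝕜 M}

theorem sigNeg_eq_of_equivalent_neg (h : Equivalent Q (-Q)) (hrad : Q.radical = ⊥) {m : ℕ}
    (hm : finrank 𝕜 M = 2 * m) : sigNeg Q = m := by
  have hsig := sigPos_add_sigNeg_add_radical (Q := Q)
  rw [h.sigPos_eq, sigPos_neg, hrad, finrank_bot, hm] at hsig
  omega

theorem sigPos_eq_of_equivalent_neg (h : Equivalent Q (-Q)) (hrad : Q.radical = ⊥) {m : ℕ}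
    (hm : finrank 𝕜 M = 2 * m) : sigPos Q = m := by
  rw [h.sigPos_eq, sigPos_neg, sigNeg_eq_of_equivalent_neg h hrad hm]

theorem isGreatest_finrank_negDef_posDef_of_equivalent_neg (h : Equivalent Q (-Q))
    (hrad : Q.radical = ⊥) {m : ℕ} (hm : finrank 𝕜 M = 2 * m) :
    ((∃ V : Submodule 𝕜 M, finrank 𝕜 V = m ∧ ∀ w ∈ V, w ≠ 0 → Q w < 0) ∧
        ∀ V : Submodule 𝕜 M, (∀ w ∈ V, w ≠ 0 → Q w < 0) → finrank 𝕜 V ≤ m) ∧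
      ((∃ V : Submodule 𝕜 M, finrank 𝕜 V = m ∧ ∀ w ∈ V, w ≠ 0 → 0 < Q w) ∧
        ∀ V : Submodule 𝕜 M, (∀ w ∈ V, w ≠ 0 → 0 < Q w) → finrank 𝕜 V ≤ m) := by
  have hneg := isGreatest_finrank_negDef Q
  have hpos := isGreatest_finrank_posDef Q
  rw [sigNeg_eq_of_equivalent_neg h hrad hm] at hneg
  rw [sigPos_eq_of_equivalent_neg h hrad hm] at hpos
  exact ⟨hneg, hpos⟩

end QuadraticForm

section SecondDerivative

variable {𝕜 E F G : Type*} [NontriviallyNormedField 𝕜] [NormedAddCommGroup E] [NormedSpace 𝕜 E]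
  [NormedAddCommGroup F] [NormedSpace 𝕜 F] [NormedAddCommGroup G] [NormedSpace 𝕜 G]

theorem fderiv_fderiv_comp_clm_apply {g : E → G} (L : F →L[𝕜] E) {x : F}
    (hg : ∀ᶠ y in 𝓝 (L x), DifferentiableAt 𝕜 g y)
    (hg' : DifferentiableAt 𝕜 (fderiv 𝕜 g) (L x)) (a b : F) :
    fderiv 𝕜 (fderiv 𝕜 (g ∘ L)) x a b = fderiv 𝕜 (fderiv 𝕜 g) (L x) (L a) (L b) := by
  have hfd : fderiv 𝕜 (g ∘ L) =ᶠ[𝓝 x] fun y => (fderiv 𝕜 g (L y)).comp L := by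
    filter_upwards [L.continuous.continuousAt.preimage_mem_nhds hg] with y hy
    rw [fderiv_comp y hy L.differentiableAt, L.fderiv]
  have hcomp : HasFDerivAt (fun y => (fderiv 𝕜 g (L y)).comp L)
      (((ContinuousLinearMap.compL 𝕜 F E G).flip L).comp
        ((fderiv 𝕜 (fderiv 𝕜 g) (L x)).comp L)) x :=
    ((ContinuousLinearMap.compL 𝕜 F E G).flip L).hasFDerivAt.comp x
      (hg'.hasFDerivAt.comp x L.hasFDerivAt)
  rw [(hcomp.congr_of_eventuallyEq hfd).fderiv]
  rfl

theorem isSymmSndFDerivAt_of_eventually_differentiableAt [IsRCLikeNormedField 𝕜] {g : E → G}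
    {x : E} (hg : ∀ᶠ y in 𝓝 x, DifferentiableAt 𝕜 g y) : IsSymmSndFDerivAt 𝕜 g x := by
  intro u v
  by_cases hg' : DifferentiableAt 𝕜 (fderiv 𝕜 g) x
  · exact second_derivative_symmetric_of_eventually
      (hg.mono fun y hy => hy.hasFDerivAt) hg'.hasFDerivAt u v
  · simp [fderiv_zero_of_not_differentiableAt hg']

end SecondDerivative

section NormSq

variable {F G : Type*} [NormedAddCommGroup F] [NormedSpace ℝ F] [NormedAddCommGroup G]
  [InnerProductSpace ℝ G]

theorem fderiv_fderiv_norm_sq_apply_of_hasFDerivAt_zero {ψ : F → G} {ψ' : F → F →L[ℝ] G}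
    {T : F →L[ℝ] F →L[ℝ] G} {x : F} (hψ : ∀ᶠ y in 𝓝 x, HasFDerivAt ψ (ψ' y) y)
    (hψ' : HasFDerivAt ψ' T x) (hcrit : ψ' x = 0) (a b : F) :
    fderiv ℝ (fderiv ℝ fun y => ‖ψ y‖ ^ 2) x a b = 2 * inner ℝ (ψ x) (T a b) := by
  have hfd : fderiv ℝ (fun y => ‖ψ y‖ ^ 2) =ᶠ[𝓝 x]
      fun y => (2 : ℕ) • (innerSL ℝ (ψ y)).comp (ψ' y) := by
    filter_upwards [hψ] with y hy using hy.norm_sq.fderiv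
  have hinner : HasFDerivAt (fun y => innerSL ℝ (ψ y)) ((innerSL ℝ).comp (ψ' x)) x :=
    (innerSL ℝ).hasFDerivAt.comp x hψ.self_of_nhds
  have hsnd := ((hinner.clm_comp hψ').const_smul (2 : ℕ)).congr_of_eventuallyEq hfd
  rw [hsnd.fderiv]
  simp [hcrit]

end NormSq

theorem Complex.deriv_eq_zero_of_fderiv_norm_sq_eq_zero {ψ : ℂ → ℂ} {x : ℂ}
    (hψ : DifferentiableAt ℂ ψ x) (hψx : ψ x ≠ 0)
    (hcrit : fderiv ℝ (fun y => ‖ψ y‖ ^ 2) x = 0) : deriv ψ x = 0 := by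
  rw [hψ.hasDerivAt.complexToReal_fderiv.norm_sq.fderiv] at hcrit
  have hinner (v : ℂ) : (deriv ψ x * v * conj (ψ x)).re = 0 := by
    simpa only [smul_apply, ContinuousLinearMap.comp_apply, one_apply_eq_self,
      innerSL_apply_apply, Complex.inner, smul_eq_mul, zero_apply, smul_eq_zero,
      two_ne_zero, false_or] using congr($hcrit v)
  have hzero : deriv ψ x * conj (ψ x) = 0 := by
    refine Complex.ext (by simpa using hinner 1) ?_
    simpa only [mul_right_comm _ I, mul_I_re, neg_eq_zero, zero_im] using hinner I
  simpa [hψx] using hzero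

theorem AnalyticAt.fderiv_fderiv_norm_sq_apply {ψ : ℂ → ℂ} {x : ℂ} (hψ : AnalyticAt ℂ ψ x)
    (hcrit : deriv ψ x = 0) (a b : ℂ) :
    fderiv ℝ (fderiv ℝ fun y => ‖ψ y‖ ^ 2) x a b =
      2 * inner ℝ (ψ x) (deriv (deriv ψ) x * a * b) := by
  have hψ' : ∀ᶠ y in 𝓝 x, HasFDerivAt ψ (deriv ψ y • (1 : ℂ →L[ℝ] ℂ)) y := by
    filter_upwards [hψ.eventually_analyticAt] with y hy
    exact hy.differentiableAt.hasDerivAt.complexToReal_fderiv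
  have hψ'' := hψ.deriv.differentiableAt.hasDerivAt.complexToReal_fderiv.smul_const
    (1 : ℂ →L[ℝ] ℂ)
  rw [fderiv_fderiv_norm_sq_apply_of_hasFDerivAt_zero hψ' hψ'' (by simp [hcrit])]
  simp

theorem fderiv_fderiv_norm_sq_apply_I_smul {E : Type*} [NormedAddCommGroup E] [NormedSpace ℂ E]
    {f : E → ℂ} (hf : ∀ᶠ z in 𝓝 0, DifferentiableAt ℂ f z) (hf0 : f 0 ≠ 0)
    (hcrit : fderiv ℝ (fun z => ‖f z‖ ^ 2) 0 = 0) (u : E) :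
    fderiv ℝ (fderiv ℝ fun z => ‖f z‖ ^ 2) 0 (I • u) (I • u) =
      -fderiv ℝ (fderiv ℝ fun z => ‖f z‖ ^ 2) 0 u u := by
  set g : E → ℝ := fun z => ‖f z‖ ^ 2
  by_cases hg' : DifferentiableAt ℝ (fderiv ℝ g) 0
  swap
  · simp [fderiv_zero_of_not_differentiableAt hg']
  set L : ℂ →L[ℂ] E := ContinuousLinearMap.toSpanSingleton ℂ u
  have hL0 : L.restrictScalars ℝ 0 = 0 := map_zero _
  have hψ : ∀ᶠ t in 𝓝 0, DifferentiableAt ℂ (f ∘ L) t :=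
    ((L.continuous.tendsto' 0 0 (map_zero L)).eventually hf).mono fun t ht =>
      ht.comp t L.differentiableAt
  have hg : ∀ᶠ z in 𝓝 (L.restrictScalars ℝ 0), DifferentiableAt ℝ g z := by
    rw [hL0]
    exact hf.mono fun z hz => (hz.restrictScalars ℝ).norm_sq ℝ
  have hψcrit : deriv (f ∘ L) 0 = 0 := by
    refine deriv_eq_zero_of_fderiv_norm_sq_eq_zero hψ.self_of_nhds (by simpa [L] using hf0) ?_
    change fderiv ℝ (g ∘ L.restrictScalars ℝ) 0 = 0
    rw [fderiv_comp 0 hg.self_of_nhds (L.restrictScalars ℝ).differentiableAt,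
      hL0, hcrit, ContinuousLinearMap.zero_comp]
  have hhess (a b : ℂ) := (fderiv_fderiv_comp_clm_apply (L.restrictScalars ℝ) hg
    (by rwa [hL0]) a b).symm.trans
    ((analyticAt_iff_eventually_differentiableAt.2 hψ).fderiv_fderiv_norm_sq_apply hψcrit a b)
  rw [hL0] at hhess
  calc fderiv ℝ (fderiv ℝ g) 0 (I • u) (I • u)
      = 2 * inner ℝ ((f ∘ L) 0) (deriv (deriv (f ∘ L)) 0 * I * I) := by
        simpa [L] using hhess I I
    _ = -(2 * inner ℝ ((f ∘ L) 0) (deriv (deriv (f ∘ L)) 0 * 1 * 1)) := by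
      simp only [mul_assoc, I_mul_I, mul_one, inner_neg_right, mul_neg]
    _ = -fderiv ℝ (fderiv ℝ g) 0 u u := by simpa [L] using congr(-$(hhess 1 1)).symm

/-- Let `f` be holomorphic on an open neighborhood `U` of `0` in
`ℂ^n` with `f 0 ≠ 0`, and suppose `0` is a nondegenerate critical point of the
real-valued function `z ↦ |f z|²`.  Then the Morse index at `0` equals `n`: the
maximal dimension of a real subspace of `ℂ^n` on which the Hessian bilinear form is
negative definite is `n`, and likewise for positive definite. -/
theorem morse_index_of_abs_sq {n : ℕ} (U : Set (Fin n → ℂ)) (hU : IsOpen U)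
    (h0 : (0 : Fin n → ℂ) ∈ U) (f : (Fin n → ℂ) → ℂ)
    (hf : DifferentiableOn ℂ f U) (hf0 : f 0 ≠ 0)
    (hcrit : fderiv ℝ (fun z => ‖f z‖ ^ 2) 0 = 0)
    (hnd : ∀ u : Fin n → ℂ,
      (∀ v : Fin n → ℂ, fderiv ℝ (fderiv ℝ fun z => ‖f z‖ ^ 2) 0 u v = 0) → u = 0) :
    ((∃ W : Submodule ℝ (Fin n → ℂ), Module.finrank ℝ W = n ∧
        ∀ w ∈ W, w ≠ 0 → fderiv ℝ (fderiv ℝ fun z => ‖f z‖ ^ 2) 0 w w < 0) ∧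
      (∀ W : Submodule ℝ (Fin n → ℂ),
        (∀ w ∈ W, w ≠ 0 → fderiv ℝ (fderiv ℝ fun z => ‖f z‖ ^ 2) 0 w w < 0) →
          Module.finrank ℝ W ≤ n)) ∧
    ((∃ W : Submodule ℝ (Fin n → ℂ), Module.finrank ℝ W = n ∧
        ∀ w ∈ W, w ≠ 0 → 0 < fderiv ℝ (fderiv ℝ fun z => ‖f z‖ ^ 2) 0 w w) ∧
      (∀ W : Submodule ℝ (Fin n → ℂ),
        (∀ w ∈ W, w ≠ 0 → 0 < fderiv ℝ (fderiv ℝ fun z => ‖f z‖ ^ 2) 0 w w) →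
          Module.finrank ℝ W ≤ n)) := by
  set Q : QuadraticForm ℝ (Fin n → ℂ) :=
    LinearMap.BilinMap.toQuadraticMap (fderiv ℝ (fderiv ℝ fun z => ‖f z‖ ^ 2) 0).toLinearMap₁₂
  have hf' : ∀ᶠ z in 𝓝 0, DifferentiableAt ℂ f z :=
    eventually_of_mem (hU.mem_nhds h0) fun z hz => hf.differentiableAt (hU.mem_nhds hz)
  have hequiv : Q.Equivalent (-Q) :=
    ⟨{ (LinearEquiv.smulOfNeZero ℂ _ I I_ne_zero).restrictScalars ℝ with
      map_app' := fun u =>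
        neg_eq_iff_eq_neg.2 (fderiv_fderiv_norm_sq_apply_I_smul hf' hf0 hcrit u) }⟩
  have hrad : Q.radical = ⊥ := LinearMap.BilinForm.radical_toQuadraticMap_eq_bot
    ⟨isSymmSndFDerivAt_of_eventually_differentiableAt
      (hf'.mono fun z hz => (hz.restrictScalars ℝ).norm_sq ℝ)⟩ hnd
  have hdim : finrank ℝ (Fin n → ℂ) = 2 * n := by
    simp [Module.finrank_pi_fintype, mul_comm]
  exact QuadraticForm.isGreatest_finrank_negDef_posDef_of_equivalent_neg hequiv hrad hdim
end

section
/- Let U ⊆ ℂ^n be open, let f, g : U → ℂ be holomorphic, and let x ∈ U with f(x) ≠ 0 and g(x) ≠ 0. If the complex Fréchet derivatives of f and g at x are linearly independent over ℂ, then the real Fréchet derivatives of the functions z ↦ |f(z)|² and z ↦ |g(z)|² at x are linearly independent over ℝ. -/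
/-!
The real differential of `‖f‖²` at `x` is `Re ∘ (2 * conj (f x) • f')`, where `f'` is the
complex differential. Rescaling `f'` and `g'` by the nonzero scalars `2 * conj (f x)` and
`2 * conj (g x)` keeps them independent, and `L ↦ Re ∘ L` is injective on complex-linear
functionals (`L v` is recovered from `Re (L v)` and `Re (L (I • v))`), so real parts of
independent functionals stay independent.
-/

open ComplexConjugate

theorem LinearIndependent.pair_map {R M N : Type*} [Ring R] [AddCommGroup M] [AddCommGroup N]
    [Module R M] [Module R N] {x y : M} (h : LinearIndependent R ![x, y]) (f : M →ₗ[R] N)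
    (hf : Function.Injective f) : LinearIndependent R ![f x, f y] := by
  rw [LinearIndependent.pair_iff] at h ⊢
  exact fun s t hst => h s t (hf (by simpa using hst))

section

variable {𝕜 E : Type*} [RCLike 𝕜] [NormedAddCommGroup E] [NormedSpace 𝕜 E] [NormedSpace ℝ E]
  [IsScalarTower ℝ 𝕜 E]

theorem HasFDerivAt.rclike_norm_sq {f : E → 𝕜} {f' : E →L[𝕜] 𝕜} {x : E}
    (hf : HasFDerivAt f f' x) :
    HasFDerivAt (fun z => ‖f z‖ ^ 2)
      (RCLike.reCLM.comp (((2 * conj (f x)) • f').restrictScalars ℝ)) x := by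
  convert (hf.restrictScalars ℝ).norm_sq using 1
  ext v
  simp [real_inner_eq_re_inner]
  ring

theorem LinearIndependent.fderiv_norm_sq {f g : E → 𝕜} {x : E}
    (hf : DifferentiableAt 𝕜 f x) (hg : DifferentiableAt 𝕜 g x) (hfx : f x ≠ 0) (hgx : g x ≠ 0)
    (hind : LinearIndependent 𝕜 ![fderiv 𝕜 f x, fderiv 𝕜 g x]) :
    LinearIndependent ℝ
      ![fderiv ℝ (fun z => ‖f z‖ ^ 2) x, fderiv ℝ (fun z => ‖g z‖ ^ 2) x] := by
  rw [hf.hasFDerivAt.rclike_norm_sq.fderiv, hg.hasFDerivAt.rclike_norm_sq.fderiv]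
  have hscaled : LinearIndependent 𝕜
      ![(2 * conj (f x)) • fderiv 𝕜 f x, (2 * conj (g x)) • fderiv 𝕜 g x] :=
    (LinearIndependent.pair_smul_smul_iff (by simpa using hfx) (by simpa using hgx)).2 hind
  simpa only [LinearEquiv.coe_coe, StrongDual.extendRCLikeₗ_symm_apply] using
    (hscaled.restrict_scalars' ℝ).pair_map _ StrongDual.extendRCLikeₗ.symm.injective

end

/-- **Lemma (iv).** Let `f, g` be holomorphic on an open set
`U ⊆ ℂ^n` and `x ∈ U` with `f x ≠ 0` and `g x ≠ 0`.  If the complex Fréchet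
derivatives of `f` and `g` at `x` are linearly independent over `ℂ`, then the real
Fréchet derivatives of `z ↦ |f z|²` and `z ↦ |g z|²` at `x` are linearly
independent over `ℝ`. -/
theorem independent_differentials_of_abs_sq {n : ℕ} (U : Set (Fin n → ℂ))
    (hU : IsOpen U) (f g : (Fin n → ℂ) → ℂ) (x : Fin n → ℂ) (hx : x ∈ U)
    (hf : DifferentiableOn ℂ f U) (hg : DifferentiableOn ℂ g U)
    (hfx : f x ≠ 0) (hgx : g x ≠ 0)
    (hind : LinearIndependent ℂ ![fderiv ℂ f x, fderiv ℂ g x]) :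
    LinearIndependent ℝ
      ![fderiv ℝ (fun z => ‖f z‖ ^ 2) x, fderiv ℝ (fun z => ‖g z‖ ^ 2) x] :=
  hind.fderiv_norm_sq (hf.differentiableAt (hU.mem_nhds hx))
    (hg.differentiableAt (hU.mem_nhds hx)) hfx hgx
end
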